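/- Let p be an s-map on a quantum logic L and x, y discrete observables with finite spectra. Then (c(x,y))² ≤ c(x,x)·c(y,y), where c(x,y) = p(x,y) − ν(x)ν(y) with ν(b)=p(b,b) extended to observables. -/

import Mathlib

/-- A quantum logic: an orthomodular lattice. -/
class QuantumLogic (L : Type*) extends Lattice L, BoundedOrder L, Compl L where
  compl_compl : ∀ a : L, aᶜᶜ = a
  sup_compl : ∀ a : L, a ⊔ aᶜ = ⊤
  compl_le_compl : ∀ a b : L, a ≤ b → bᶜ ≤ aᶜ
  orthomodular : ∀ a b : L, a ≤ b → b = a ⊔ aᶜ ⊓ b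

section Defs
variable {L : Type*} [QuantumLogic L]

/-- Orthogonality: `a ⊥ b` iff `a ≤ bᶜ`. -/
def Orth (a b : L) : Prop := a ≤ bᶜ

/-- Compatibility: `a ↔ b` iff they decompose via mutually orthogonal elements. -/
def Compatible (a b : L) : Prop :=
  ∃ a₁ b₁ c : L, Orth a₁ b₁ ∧ Orth a₁ c ∧ Orth b₁ c ∧ a = a₁ ⊔ c ∧ b = b₁ ⊔ c

/-- An s-map on a quantum logic. -/
structure IsSMap (p : L → L → ℝ) : Prop where
  nonneg : ∀ a b, 0 ≤ p a b
  le_one : ∀ a b, p a b ≤ 1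
  top_top : p ⊤ ⊤ = 1
  orth_zero : ∀ a b, Orth a b → p a b = 0
  add_left : ∀ a b c, Orth a b → p (a ⊔ b) c = p a c + p b c
  add_right : ∀ a b c, Orth a b → p c (a ⊔ b) = p c a + p c b

/-- A conditional system in `L`. -/
def IsCondSystem (Lc : Set L) : Prop :=
  (⊥ : L) ∉ Lc ∧ (∀ a ∈ Lc, ∀ b ∈ Lc, a ⊔ b ∈ Lc) ∧
    ∀ a ∈ Lc, ∀ b ∈ Lc, a < b → aᶜ ⊓ b ∈ Lc

/-- A conditional state `f : L × L_c → [0,1]`. -/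
structure IsConditionalState (Lc : Set L) (f : L → L → ℝ) : Prop where
  nonneg : ∀ a b, b ∈ Lc → 0 ≤ f a b
  le_one : ∀ a b, b ∈ Lc → f a b ≤ 1
  state_bot : ∀ a ∈ Lc, f ⊥ a = 0
  state_top : ∀ a ∈ Lc, f ⊤ a = 1
  state_add : ∀ a ∈ Lc, ∀ b c : L, Orth b c → f (b ⊔ c) a = f b a + f c a
  diag : ∀ a ∈ Lc, f a a = 1
  cond : ∀ s : Finset L, (↑s : Set L) ⊆ Lc →
    (∀ a ∈ s, ∀ b ∈ s, a ≠ b → Orth a b) → s.sup id ∈ Lc →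
    ∀ d : L, f d (s.sup id) = ∑ a ∈ s, f a (s.sup id) * f d a

/-- A finite-spectrum discrete observable, given by its family of atoms
(mutually orthogonal events whose join is `⊤`). -/
def IsFinObs {n : ℕ} (e : Fin n → L) : Prop :=
  (∀ i j, i ≠ j → Orth (e i) (e j)) ∧ Finset.univ.sup e = ⊤

/-- Expectation `ν(x)` of a finite-spectrum observable with values `v` and events `e`
in the state `ν(b) = p(b,b)`. -/
noncomputable def nuObs (p : L → L → ℝ) {n : ℕ} (v : Fin n → ℝ) (e : Fin n → L) : ℝ :=
  ∑ i, v i * p (e i) (e i)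

/-- First joint moment `p(x,y)` of two finite-spectrum observables. -/
noncomputable def jointMoment (p : L → L → ℝ) {n m : ℕ} (xv : Fin n → ℝ) (xe : Fin n → L)
    (yv : Fin m → ℝ) (ye : Fin m → L) : ℝ :=
  ∑ i, ∑ j, xv i * yv j * p (xe i) (ye j)

/-- Covariance `c(x,y) = p(x,y) - ν(x)ν(y)`. -/
noncomputable def covObs (p : L → L → ℝ) {n m : ℕ} (xv : Fin n → ℝ) (xe : Fin n → L)
    (yv : Fin m → ℝ) (ye : Fin m → L) : ℝ :=
  jointMoment p xv xe yv ye - nuObs p xv xe * nuObs p yv ye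

end Defs

section Proof
variable {L : Type*} [QuantumLogic L]

lemma orth_compl_self' (a : L) : Orth a aᶜ := by
  unfold Orth; rw [QuantumLogic.compl_compl]

lemma compl_bot' : (⊥ : L)ᶜ = ⊤ := by
  have := QuantumLogic.sup_compl (⊥ : L); simpa using this

lemma smap_sum_right' (p : L → L → ℝ) (hp : IsSMap p) {m : ℕ} (e : Fin m → L)
    (he : ∀ i j, i ≠ j → Orth (e i) (e j)) (c : L) (s : Finset (Fin m)) :
    p c (s.sup e) = ∑ j ∈ s, p c (e j) := by
  induction s using Finset.induction with
  | empty =>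
      simp [hp.orth_zero c ⊥ (by rw [Orth, compl_bot']; exact le_top)]
  | @insert a s ha ih =>

      have horth : Orth (e a) (s.sup e) := by
        have h1 : s.sup e ≤ (e a)ᶜ := by
          apply Finset.sup_le
          intro i hi
          exact he i a (fun h => ha (h ▸ hi))
        have := QuantumLogic.compl_le_compl _ _ h1
        rw [QuantumLogic.compl_compl] at this
        exact this
      rw [Finset.sup_insert, hp.add_right _ _ _ horth, Finset.sum_insert ha, ih]

lemma smap_sum_left' (p : L → L → ℝ) (hp : IsSMap p) {m : ℕ} (e : Fin m → L)
    (he : ∀ i j, i ≠ j → Orth (e i) (e j)) (c : L) (s : Finset (Fin m)) :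
    p (s.sup e) c = ∑ j ∈ s, p (e j) c := by
  induction s using Finset.induction with
  | empty =>
      simp [hp.orth_zero ⊥ c (by rw [Orth]; exact bot_le)]
  | @insert a s ha ih =>

      have horth : Orth (e a) (s.sup e) := by
        have h1 : s.sup e ≤ (e a)ᶜ := by
          apply Finset.sup_le
          intro i hi
          exact he i a (fun h => ha (h ▸ hi))
        have := QuantumLogic.compl_le_compl _ _ h1
        rw [QuantumLogic.compl_compl] at this
        exact this
      rw [Finset.sup_insert, hp.add_left _ _ _ horth, Finset.sum_insert ha, ih]

lemma smap_top_right' (p : L → L → ℝ) (hp : IsSMap p) (a : L) : p a ⊤ = p a a := by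
  rw [← QuantumLogic.sup_compl a, hp.add_right _ _ _ (orth_compl_self' a),
    hp.orth_zero a aᶜ (orth_compl_self' a), add_zero]

lemma smap_top_left' (p : L → L → ℝ) (hp : IsSMap p) (a : L) : p ⊤ a = p a a := by
  rw [← QuantumLogic.sup_compl a, hp.add_left _ _ _ (orth_compl_self' a),
    hp.orth_zero aᶜ a (le_refl _), add_zero]

end Proof

section Proof2
variable {L : Type*} [QuantumLogic L]

lemma smap_cov_eq_sum (p : L → L → ℝ) (hp : IsSMap p) {n m : ℕ} (xv : Fin n → ℝ)
    (xe : Fin n → L) (yv : Fin m → ℝ) (ye : Fin m → L)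
    (hx : IsFinObs xe) (hy : IsFinObs ye) :
    covObs p xv xe yv ye = ∑ q : Fin n × Fin m,
      p (xe q.1) (ye q.2) * ((xv q.1 - nuObs p xv xe) * (yv q.2 - nuObs p yv ye)) := by
  obtain ⟨hxo, hxt⟩ := hx
  obtain ⟨hyo, hyt⟩ := hy
  set νx := nuObs p xv xe with hνx
  set νy := nuObs p yv ye with hνy
  have hrow : ∀ i, ∑ j, p (xe i) (ye j) = p (xe i) (xe i) := by
    intro i
    rw [← smap_sum_right' p hp ye hyo (xe i) Finset.univ, hyt, smap_top_right' p hp]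
  have hcol : ∀ j, ∑ i, p (xe i) (ye j) = p (ye j) (ye j) := by
    intro j
    rw [← smap_sum_left' p hp xe hxo (ye j) Finset.univ, hxt, smap_top_left' p hp]
  have htrx : ∑ i, p (xe i) (xe i) = 1 := by
    have h1 : ∀ i, p (xe i) (xe i) = p (xe i) ⊤ := fun i => (smap_top_right' p hp _).symm
    simp_rw [h1]
    rw [← smap_sum_left' p hp xe hxo ⊤ Finset.univ, hxt, hp.top_top]
  have Sx : ∑ q : Fin n × Fin m, xv q.1 * p (xe q.1) (ye q.2) = νx := by
    rw [Fintype.sum_prod_type]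
    simp_rw [← Finset.mul_sum, hrow]
    rw [hνx]; rfl
  have Sy : ∑ q : Fin n × Fin m, yv q.2 * p (xe q.1) (ye q.2) = νy := by
    rw [Fintype.sum_prod_type_right]
    simp_rw [← Finset.mul_sum, hcol]
    rw [hνy]; rfl
  have S1 : ∑ q : Fin n × Fin m, p (xe q.1) (ye q.2) = 1 := by
    rw [Fintype.sum_prod_type]
    simp_rw [hrow]
    exact htrx
  have SJ : ∑ q : Fin n × Fin m, xv q.1 * yv q.2 * p (xe q.1) (ye q.2)
      = jointMoment p xv xe yv ye := by
    rw [Fintype.sum_prod_type]; rfl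
  have expand : ∀ q : Fin n × Fin m,
      p (xe q.1) (ye q.2) * ((xv q.1 - νx) * (yv q.2 - νy))
      = xv q.1 * yv q.2 * p (xe q.1) (ye q.2) - νy * (xv q.1 * p (xe q.1) (ye q.2))
        - νx * (yv q.2 * p (xe q.1) (ye q.2)) + νx * νy * p (xe q.1) (ye q.2) := by
    intro q; ring
  simp_rw [expand, Finset.sum_add_distrib, Finset.sum_sub_distrib, ← Finset.mul_sum]
  rw [Sx, Sy, S1, SJ, covObs]
  ring

end Proof2

/-- Cauchy–Schwarz type inequality `(c(x,y))² ≤ c(x,x)·c(y,y)`. -/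
theorem smap_cov_cauchy_schwarz {L : Type*} [QuantumLogic L] (p : L → L → ℝ)
    (hp : IsSMap p) {n m : ℕ} (xv : Fin n → ℝ) (xe : Fin n → L)
    (yv : Fin m → ℝ) (ye : Fin m → L)
    (hxv : Function.Injective xv) (hx : IsFinObs xe)
    (hyv : Function.Injective yv) (hy : IsFinObs ye) :
    (covObs p xv xe yv ye) ^ 2 ≤ covObs p xv xe xv xe * covObs p yv ye yv ye := by
  obtain ⟨hxo, hxt⟩ := id hx
  obtain ⟨hyo, hyt⟩ := id hy
  set νx := nuObs p xv xe with hνx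
  set νy := nuObs p yv ye with hνy
  set A : Fin n → ℝ := fun i => xv i - νx with hA
  set B : Fin m → ℝ := fun j => yv j - νy with hB
  have hrow : ∀ i, ∑ j, p (xe i) (ye j) = p (xe i) (xe i) := by
    intro i
    rw [← smap_sum_right' p hp ye hyo (xe i) Finset.univ, hyt, smap_top_right' p hp]
  have hcol : ∀ j, ∑ i, p (xe i) (ye j) = p (ye j) (ye j) := by
    intro j
    rw [← smap_sum_left' p hp xe hxo (ye j) Finset.univ, hxt, smap_top_left' p hp]
  -- diagonal covariances
  have cxx : covObs p xv xe xv xe = ∑ i, p (xe i) (xe i) * A i ^ 2 := by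
    rw [smap_cov_eq_sum p hp xv xe xv xe hx hx, Fintype.sum_prod_type]
    refine Finset.sum_congr rfl fun i _ => ?_
    rw [Finset.sum_eq_single i]
    · simp only [hA]; ring
    · intro j _ hj
      rw [hp.orth_zero _ _ (hxo i j (Ne.symm hj)), zero_mul]
    · intro h; exact absurd (Finset.mem_univ i) h
  have cyy : covObs p yv ye yv ye = ∑ j, p (ye j) (ye j) * B j ^ 2 := by
    rw [smap_cov_eq_sum p hp yv ye yv ye hy hy, Fintype.sum_prod_type]
    refine Finset.sum_congr rfl fun j _ => ?_
    rw [Finset.sum_eq_single j]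
    · simp only [hB]; ring
    · intro k _ hk
      rw [hp.orth_zero _ _ (hyo j k (Ne.symm hk)), zero_mul]
    · intro h; exact absurd (Finset.mem_univ j) h
  have cxy : covObs p xv xe yv ye
      = ∑ q : Fin n × Fin m, p (xe q.1) (ye q.2) * (A q.1 * B q.2) := by
    rw [smap_cov_eq_sum p hp xv xe yv ye hx hy]
  -- Cauchy-Schwarz
  have CS := Finset.sum_mul_sq_le_sq_mul_sq (Finset.univ : Finset (Fin n × Fin m))
    (fun q => Real.sqrt (p (xe q.1) (ye q.2)) * A q.1)
    (fun q => Real.sqrt (p (xe q.1) (ye q.2)) * B q.2)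
  have hfg : ∀ q : Fin n × Fin m,
      (Real.sqrt (p (xe q.1) (ye q.2)) * A q.1) * (Real.sqrt (p (xe q.1) (ye q.2)) * B q.2)
      = p (xe q.1) (ye q.2) * (A q.1 * B q.2) := by
    intro q
    have : Real.sqrt (p (xe q.1) (ye q.2)) * Real.sqrt (p (xe q.1) (ye q.2))
        = p (xe q.1) (ye q.2) := Real.mul_self_sqrt (hp.nonneg _ _)
    linear_combination (A q.1 * B q.2) * this
  have hf2 : ∀ q : Fin n × Fin m,
      (Real.sqrt (p (xe q.1) (ye q.2)) * A q.1) ^ 2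
      = p (xe q.1) (ye q.2) * A q.1 ^ 2 := by
    intro q
    rw [mul_pow, Real.sq_sqrt (hp.nonneg _ _)]
  have hg2 : ∀ q : Fin n × Fin m,
      (Real.sqrt (p (xe q.1) (ye q.2)) * B q.2) ^ 2
      = p (xe q.1) (ye q.2) * B q.2 ^ 2 := by
    intro q
    rw [mul_pow, Real.sq_sqrt (hp.nonneg _ _)]
  simp_rw [hfg, hf2, hg2] at CS
  have hfsum : ∑ q : Fin n × Fin m, p (xe q.1) (ye q.2) * A q.1 ^ 2
      = ∑ i, p (xe i) (xe i) * A i ^ 2 := by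
    rw [Fintype.sum_prod_type]
    refine Finset.sum_congr rfl fun i _ => ?_
    show (∑ j, p (xe i) (ye j) * A i ^ 2) = _
    rw [← Finset.sum_mul, hrow]
  have hgsum : ∑ q : Fin n × Fin m, p (xe q.1) (ye q.2) * B q.2 ^ 2
      = ∑ j, p (ye j) (ye j) * B j ^ 2 := by
    rw [Fintype.sum_prod_type_right]
    refine Finset.sum_congr rfl fun j _ => ?_
    show (∑ i, p (xe i) (ye j) * B j ^ 2) = _
    rw [← Finset.sum_mul, hcol]
  rw [hfsum, hgsum] at CS
  rw [cxx, cyy, cxy]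
  exact CS
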